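/- Fix d ≥ 1 and let (a_m) be the sequence of the main construction. For every m = 3dn + r > 3d + 2 with r ≡ 1 (mod 3), assuming all earlier terms take their claimed values, a_{m−a_{m−1}} + a_{m−a_{m−2}} = 3d (with a_j = 0 for j ≤ 0). -/

import Mathlib

/-!
For `r = 1`, `a_{m-1} = p_{d,0}(n) = 3dn` sends `m - a_{m-1}` to `1`, contributing `a_1 = 3d - 2`,
and `m - 2 ≡ -1 (mod 3d)` gives `a_{m-2} = 2`, so the second term is `a_{m-2} = 2` as well.
For `r = 3k + 1` with `k ≥ 1`, `p_{d,k}(n)` is at least its leading summand `3dn` plus the last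
summand `3k + 2` of its tail, so `m - a_{m-1} < 0` and the first term vanishes, while
`a_{m-2} = 3` and `a_{m-3} = 3d`.
-/

/-- Binomial coefficient `C(x, j)` extended polynomially in the (integer) upper argument. -/
def pbinom (x : ℤ) (j : ℕ) : ℤ := (∏ i ∈ Finset.range j, (x - i)) / (Nat.factorial j : ℤ)

/-- `p_{d,k}(n) = 3d·C(n+k, 1+k) + Σ_{i=1}^{k} (3i+2)·C(n-1+k-i, k-i)`. -/
def hp (d k n : ℤ) : ℤ :=
  3 * d * pbinom (n + k) (1 + k).toNat
    + ∑ i ∈ Finset.Icc 1 k.toNat, (3 * (i : ℤ) + 2) * pbinom (n - 1 + k - (i : ℤ)) (k.toNat - i)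

/-- The sequence of the main construction, with `a j = 0` for `j ≤ 0`. -/
def hseq (d : ℤ) (m : ℤ) : ℤ :=
  if m ≤ 0 then 0
  else if m = 1 then 3 * d - 2
  else if m = 2 then 0
  else
    if (m % (3 * d)) % 3 = 0 then hp d ((m % (3 * d)) / 3) (m / (3 * d))
    else if (m % (3 * d)) % 3 = 1 then 3 * d
    else if m % (3 * d) = 3 * d - 1 then 2
    else 3

lemma pbinom_natCast (x j : ℕ) : pbinom x j = x.choose j := by
  rw [pbinom]
  rcases le_or_gt j x with h | h
  · have hprod : ∏ i ∈ Finset.range j, ((x : ℤ) - i) = (x.descFactorial j : ℤ) := by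
      rw [Nat.descFactorial_eq_prod_range, Nat.cast_prod]
      refine Finset.prod_congr rfl fun i hi => ?_
      have : i < j := Finset.mem_range.mp hi
      omega
    rw [hprod, Nat.descFactorial_eq_factorial_mul_choose, Nat.cast_mul, mul_comm]
    exact Int.mul_ediv_cancel _ (by exact_mod_cast j.factorial_ne_zero)
  · have hprod : ∏ i ∈ Finset.range j, ((x : ℤ) - i) = 0 :=
      Finset.prod_eq_zero (Finset.mem_range.mpr h) (sub_self _)
    rw [hprod, Nat.choose_eq_zero_of_lt h, Int.zero_ediv, Nat.cast_zero]

lemma pbinom_of_nonneg {x : ℤ} (hx : 0 ≤ x) (j : ℕ) : pbinom x j = x.toNat.choose j := by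
  rw [← pbinom_natCast, Int.toNat_of_nonneg hx]

lemma pbinom_nonneg {x : ℤ} (hx : 0 ≤ x) (j : ℕ) : 0 ≤ pbinom x j := by
  rw [pbinom_of_nonneg hx]; positivity

@[simp] lemma pbinom_zero (x : ℤ) : pbinom x 0 = 1 := by simp [pbinom]

@[simp] lemma pbinom_one (x : ℤ) : pbinom x 1 = x := by simp [pbinom]

lemma Nat.le_choose_add_succ (n k : ℕ) : n ≤ (n + k).choose (k + 1) := by
  induction k with
  | zero => simp
  | succ k ih =>
    rw [← Nat.add_assoc, Nat.choose_succ_succ]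
    omega

lemma hp_zero (d n : ℤ) : hp d 0 n = 3 * d * n := by
  simp [hp]

lemma le_hp_leading (d k n : ℤ) (hd : 0 ≤ d) (hk : 0 ≤ k) (hn : 0 ≤ n) :
    3 * d * n ≤ 3 * d * pbinom (n + k) (1 + k).toNat := by
  have hchoose :
      pbinom (n + k) (1 + k).toNat = ((n.toNat + k.toNat).choose (k.toNat + 1) : ℤ) := by
    rw [pbinom_of_nonneg (by omega), show (n + k).toNat = n.toNat + k.toNat by omega,
      show (1 + k).toNat = k.toNat + 1 by omega]
  have hle : n ≤ pbinom (n + k) (1 + k).toNat := by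
    rw [hchoose]
    calc n = (n.toNat : ℤ) := (Int.toNat_of_nonneg hn).symm
      _ ≤ _ := by exact_mod_cast Nat.le_choose_add_succ _ _
  exact mul_le_mul_of_nonneg_left hle (by omega)

lemma le_hp_tail (k n : ℤ) (hk : 1 ≤ k) (hn : 1 ≤ n) :
    3 * k + 2 ≤ ∑ i ∈ Finset.Icc 1 k.toNat,
      (3 * (i : ℤ) + 2) * pbinom (n - 1 + k - (i : ℤ)) (k.toNat - i) := by
  have hmem : k.toNat ∈ Finset.Icc 1 k.toNat := Finset.mem_Icc.mpr ⟨by omega, le_rfl⟩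
  have hnonneg : ∀ i ∈ Finset.Icc 1 k.toNat,
      0 ≤ (3 * (i : ℤ) + 2) * pbinom (n - 1 + k - (i : ℤ)) (k.toNat - i) := by
    intro i hi
    have := (Finset.mem_Icc.mp hi).2
    exact mul_nonneg (by positivity) (pbinom_nonneg (by omega) _)
  have hlast := Finset.single_le_sum hnonneg hmem
  simpa [Int.toNat_of_nonneg (by omega : 0 ≤ k)] using hlast

lemma le_hp (d k n : ℤ) (hd : 0 ≤ d) (hk : 1 ≤ k) (hn : 1 ≤ n) :
    3 * d * n + 3 * k + 2 ≤ hp d k n := by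
  have := le_hp_leading d k n hd (by omega) (by omega)
  have := le_hp_tail k n hk hn
  unfold hp
  omega

section Evaluation

variable {d m n r : ℤ}

lemma hseq_of_eq_mul_add (hd : 0 < d) (hm : 2 < m) (hmr : m = 3 * d * n + r) (hr0 : 0 ≤ r)
    (hr : r < 3 * d) :
    hseq d m = if r % 3 = 0 then hp d (r / 3) n
      else if r % 3 = 1 then 3 * d
      else if r = 3 * d - 1 then 2 else 3 := by
  obtain ⟨hdiv, hmod⟩ := (Int.ediv_emod_unique (a := m) (q := n) (by omega)).2
    ⟨by rw [hmr]; ring, hr0, hr⟩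
  rw [hseq, if_neg (by omega), if_neg (by omega), if_neg (by omega), hdiv, hmod]

lemma hseq_of_emod_three_eq_zero (hd : 0 < d) (hm : 2 < m) (hmr : m = 3 * d * n + r)
    (hr0 : 0 ≤ r) (hr : r < 3 * d) (h : r % 3 = 0) : hseq d m = hp d (r / 3) n := by
  rw [hseq_of_eq_mul_add hd hm hmr hr0 hr, if_pos h]

lemma hseq_of_emod_three_eq_one (hd : 0 < d) (hm : 2 < m) (hmr : m = 3 * d * n + r)
    (hr0 : 0 ≤ r) (hr : r < 3 * d) (h : r % 3 = 1) : hseq d m = 3 * d := by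
  rw [hseq_of_eq_mul_add hd hm hmr hr0 hr, if_neg (by omega), if_pos h]

lemma hseq_of_emod_three_eq_two (hd : 0 < d) (hm : 2 < m) (hmr : m = 3 * d * n + r)
    (hr0 : 0 ≤ r) (hr : r < 3 * d - 1) (h : r % 3 = 2) : hseq d m = 3 := by
  rw [hseq_of_eq_mul_add hd hm hmr hr0 (by omega), if_neg (by omega), if_neg (by omega),
    if_neg (by omega)]

lemma hseq_mul_sub_one (hd : 0 < d) (hm : 2 < m) (hmn : m = 3 * d * n - 1) : hseq d m = 2 := by
  rw [hseq_of_eq_mul_add (n := n - 1) (r := 3 * d - 1) hd hm (by rw [hmn]; ring) (by omega)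
    (by omega), if_neg (by omega), if_neg (by omega), if_pos rfl]

end Evaluation

lemma hseq_case_one_of_rem_eq_one {d n m : ℤ} (hd : 1 ≤ d) (hn : 2 ≤ n)
    (hm : m = 3 * d * n + 1) :
    hseq d (m - hseq d (m - 1)) + hseq d (m - hseq d (m - 2)) = 3 * d := by
  have hdn : 6 ≤ 3 * d * n := by nlinarith
  have hprev : hseq d (m - 1) = 3 * d * n := by
    rw [hseq_of_emod_three_eq_zero (n := n) (r := 0) (by omega) (by omega) (by omega) le_rfl
      (by omega) rfl, Int.zero_ediv, hp_zero]
  have hprev2 : hseq d (m - 2) = 2 := hseq_mul_sub_one (n := n) (by omega) (by omega) (by omega)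
  have hone : hseq d 1 = 3 * d - 2 := by simp [hseq]
  rw [hprev, hprev2, show m - 3 * d * n = 1 by omega, hone, hprev2]
  ring

lemma hseq_case_one_of_rem_eq_three_mul_add_one {d n k m : ℤ} (hd : 1 ≤ d) (hn : 1 ≤ n)
    (hk : 1 ≤ k) (hkd : 3 * k + 1 < 3 * d) (hm : m = 3 * d * n + (3 * k + 1)) :
    hseq d (m - hseq d (m - 1)) + hseq d (m - hseq d (m - 2)) = 3 * d := by
  have hdn : 3 ≤ 3 * d * n := by nlinarith
  have hprev : hseq d (m - 1) = hp d k n := by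
    rw [hseq_of_emod_three_eq_zero (n := n) (r := 3 * k) (by omega) (by omega) (by omega) (by omega)
      (by omega) (by omega), Int.mul_ediv_cancel_left _ three_ne_zero]
  have hfirst : hseq d (m - hseq d (m - 1)) = 0 := by
    have := le_hp d k n (by omega) hk hn
    rw [hseq, if_pos (by omega)]
  have hprev2 : hseq d (m - 2) = 3 :=
    hseq_of_emod_three_eq_two (n := n) (r := 3 * k - 1) (by omega) (by omega) (by omega) (by omega)
      (by omega) (by omega)
  have hprev3 : hseq d (m - 3) = 3 * d :=
    hseq_of_emod_three_eq_one (n := n) (r := 3 * k - 2) (by omega) (by omega) (by omega) (by omega)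
      (by omega) (by omega)
  rw [hfirst, hprev2, hprev3, zero_add]

theorem hseq_case_one (d : ℤ) (hd : 1 ≤ d) (n r m : ℤ) (hr0 : 0 ≤ r) (hr : r < 3 * d)
    (hm : m = 3 * d * n + r) (hbig : 3 * d + 2 < m) (h3 : r % 3 = 1) :
    hseq d (m - hseq d (m - 1)) + hseq d (m - hseq d (m - 2)) = 3 * d := by
  obtain ⟨k, rfl⟩ : ∃ k, r = 3 * k + 1 := ⟨r / 3, by omega⟩
  have hn : 1 ≤ n := by
    by_contra! hn
    nlinarith
  rcases (show k = 0 ∨ 1 ≤ k by omega) with rfl | hk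
  · have hn2 : 2 ≤ n := by
      by_contra! hn2
      obtain rfl : n = 1 := by omega
      omega
    exact hseq_case_one_of_rem_eq_one hd hn2 (by omega)
  · exact hseq_case_one_of_rem_eq_three_mul_add_one hd hn hk hr hm
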